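/- Fix $c\in\mathbb{R}$ and $\varepsilon>0$. The nonautonomous equation $\dot x=f_c(t,x)$ has exactly two bounded full solutions if $c>0$ (distinguished by their values $u(0)=(\sqrt{c},0)$ and $u(0)=(-\sqrt{c},0)$), exactly one bounded full solution if $c=0$, and no bounded full solution if $c<0$. -/

import Mathlib

/-- `f⁻_c(x₁,x₂) = (x₁, -x₂ + 3x₁² - c)` -/
def fminus (c : ℝ) : ℝ × ℝ → ℝ × ℝ := fun x => (x.1, -x.2 + 3 * x.1 ^ 2 - c)

/-- `f⁺_ε(x₁,x₂) = (-x₁ + εx₂, x₂)` -/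
def fplus (ε : ℝ) : ℝ × ℝ → ℝ × ℝ := fun x => (-x.1 + ε * x.2, x.2)

/-- `f_c(t,x) = φ'(-t) f⁻_c(x) + φ'(t) f⁺_ε(x)`, where `dφ = φ'`. -/
def fc (c ε : ℝ) (dφ : ℝ → ℝ) (t : ℝ) (x : ℝ × ℝ) : ℝ × ℝ :=
  dφ (-t) • fminus c x + dφ t • fplus ε x

/-- A bounded full solution of `ẋ = f_c(t,x)`. -/
def BddSol (c ε : ℝ) (dφ : ℝ → ℝ) (u : ℝ → ℝ × ℝ) : Prop :=
  (∀ t : ℝ, HasDerivAt u (fc c ε dφ t (u t)) t) ∧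
  Bornology.IsBounded (Set.range u)

/-!
On `t ≤ 0` the field is `φ'(-t) f⁻_c` and on `t ≥ 0` it is `φ'(t) f⁺_ε`, each half being an
autonomous system run with the clock `φ(∓t)`, and `φ(t) = t` for `t ≥ 1`. On `t ≥ 0` the
coordinate `x₂` is multiplied by `e^{φ(t)}`, so boundedness forces `x₂ ≡ 0` there; on `t ≤ 0`
the quantity `x₂ - x₁² + c` is multiplied by `e^{φ(-t)}`, so a bounded solution lies on the
parabola `x₂ = x₁² - c`. Both conditions hold at `t = 0`, whence `x₁(0)² = c`, and each `a`
with `a² = c` gives exactly one bounded solution, written down explicitly.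
-/

open Real Set Filter

theorem HasDerivAt.fst {E F : Type*} [NormedAddCommGroup E] [NormedSpace ℝ E]
    [NormedAddCommGroup F] [NormedSpace ℝ F] {f : ℝ → E × F} {f' : E × F} {t : ℝ}
    (h : HasDerivAt f f' t) : HasDerivAt (fun s => (f s).1) f'.1 t :=
  (ContinuousLinearMap.fst ℝ E F).hasFDerivAt.comp_hasDerivAt t h

theorem HasDerivAt.snd {E F : Type*} [NormedAddCommGroup E] [NormedSpace ℝ E]
    [NormedAddCommGroup F] [NormedSpace ℝ F] {f : ℝ → E × F} {f' : E × F} {t : ℝ}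
    (h : HasDerivAt f f' t) : HasDerivAt (fun s => (f s).2) f'.2 t :=
  (ContinuousLinearMap.snd ℝ E F).hasFDerivAt.comp_hasDerivAt t h

theorem HasDerivAt.comp_neg {f : ℝ → ℝ} {f' x : ℝ} (h : HasDerivAt f f' (-x)) :
    HasDerivAt (fun s => f (-s)) (-f') x := by
  have h' := h.scomp x (hasDerivAt_neg x)
  rwa [neg_one_smul] at h'

theorem eq_mul_exp_sub_of_hasDerivAt {s : Set ℝ} (hs : Convex ℝ s) {y ψ ψ' : ℝ → ℝ}
    (hψ : ∀ t ∈ s, HasDerivAt ψ (ψ' t) t) (hy : ∀ t ∈ s, HasDerivAt y (ψ' t * y t) t)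
    {t₀ t : ℝ} (ht₀ : t₀ ∈ s) (ht : t ∈ s) : y t = y t₀ * exp (ψ t - ψ t₀) := by
  have hderiv : ∀ τ ∈ s, HasDerivWithinAt (fun τ => y τ * exp (-ψ τ)) 0 s τ := by
    intro τ hτ
    refine ((hy τ hτ).mul (hψ τ hτ).neg.exp).hasDerivWithinAt.congr_deriv ?_
    simp only [Pi.neg_apply]
    ring
  have hconst := hs.norm_image_sub_le_of_norm_hasDerivWithin_le (C := 0) hderiv
    (fun _ _ => by simp) ht₀ ht
  rw [zero_mul, norm_le_zero_iff, sub_eq_zero] at hconst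
  calc y t = y t * exp (-ψ t) * exp (ψ t) := by
        rw [mul_assoc, ← exp_add, neg_add_cancel, exp_zero, mul_one]
    _ = y t₀ * exp (ψ t - ψ t₀) := by rw [hconst, mul_assoc, ← exp_add, neg_add_eq_sub]

theorem eq_zero_of_eventually_abs_mul_exp_le {b C : ℝ}
    (h : ∀ᶠ t in atTop, |b * exp t| ≤ C) : b = 0 := by
  by_contra hb
  have hgrow : Tendsto (fun t => |b * exp t|) atTop atTop := by
    simp_rw [abs_mul, abs_exp]
    exact tendsto_exp_atTop.const_mul_atTop (abs_pos.2 hb)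
  obtain ⟨t, hle, hgt⟩ := (h.and (hgrow.eventually_gt_atTop C)).exists
  exact hle.not_gt hgt

section

variable {φ dφ : ℝ → ℝ}

theorem dφ_eq_zero_of_nonpos (hφ : ∀ t, HasDerivAt φ (dφ t) t) (hφ0 : ∀ t ≤ (0:ℝ), φ t = 0)
    {t : ℝ} (ht : t ≤ 0) : dφ t = 0 :=
  ((uniqueDiffOn_Iic 0) t ht).eq_deriv _ (hφ t).hasDerivWithinAt
    ((hasDerivWithinAt_const t _ 0).congr hφ0 (hφ0 t ht))

theorem bddBelow_range_of_eq_zero_of_eq_self (hφ : ∀ t, HasDerivAt φ (dφ t) t)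
    (hφ0 : ∀ t ≤ (0:ℝ), φ t = 0) (hφ1 : ∀ t ≥ (1:ℝ), φ t = t) : BddBelow (range φ) := by
  have hcont : ContinuousOn φ (Icc 0 1) := fun t _ => (hφ t).continuousAt.continuousWithinAt
  refine ((isCompact_Icc.image_of_continuousOn hcont).bddBelow.union
    (bddBelow_Ici (a := 0))).mono ?_
  rintro _ ⟨t, rfl⟩
  rcases le_total t 0 with ht | ht
  · exact Or.inr (hφ0 t ht).ge
  rcases le_total t 1 with ht' | ht'
  · exact Or.inl ⟨t, ⟨ht, ht'⟩, rfl⟩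
  · exact Or.inr (by rw [mem_Ici, hφ1 t ht']; linarith)

theorem fc_of_nonneg (hφ : ∀ t, HasDerivAt φ (dφ t) t) (hφ0 : ∀ t ≤ (0:ℝ), φ t = 0)
    (c ε : ℝ) {t : ℝ} (ht : 0 ≤ t) (x : ℝ × ℝ) : fc c ε dφ t x = dφ t • fplus ε x := by
  rw [fc, dφ_eq_zero_of_nonpos hφ hφ0 (neg_nonpos.2 ht), zero_smul, zero_add]

theorem fc_of_nonpos (hφ : ∀ t, HasDerivAt φ (dφ t) t) (hφ0 : ∀ t ≤ (0:ℝ), φ t = 0)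
    (c ε : ℝ) {t : ℝ} (ht : t ≤ 0) (x : ℝ × ℝ) : fc c ε dφ t x = dφ (-t) • fminus c x := by
  rw [fc, dφ_eq_zero_of_nonpos hφ hφ0 ht, zero_smul, add_zero]

/-- Equal to `(a e^{-φ t}, 0)` for `t ≥ 0` and to `(a e^{-φ(-t)}, a² (e^{-2φ(-t)} - 1))` for
`t ≤ 0`, since `φ` vanishes on `(-∞, 0]`. -/
noncomputable def explicitSol (φ : ℝ → ℝ) (a : ℝ) (t : ℝ) : ℝ × ℝ :=
  (a * exp (-φ t) * exp (-φ (-t)), a ^ 2 * (exp (-φ (-t)) ^ 2 - 1))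

theorem explicitSol_zero (hφ0 : ∀ t ≤ (0:ℝ), φ t = 0) (a : ℝ) : explicitSol φ a 0 = (a, 0) := by
  simp [explicitSol, hφ0 0 le_rfl]

theorem hasDerivAt_explicitSol (hφ : ∀ t, HasDerivAt φ (dφ t) t) (hφ0 : ∀ t ≤ (0:ℝ), φ t = 0)
    (ε a t : ℝ) : HasDerivAt (explicitSol φ a) (fc (a ^ 2) ε dφ t (explicitSol φ a t)) t := by
  have hE := (hφ t).neg.exp
  have hE' := ((hφ (-t)).comp_neg).neg.exp
  refine ((hE.const_mul a).mul hE').prodMk (((hE'.pow 2).sub_const 1).const_mul (a ^ 2))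
    |>.congr_deriv ?_
  rcases le_total 0 t with ht | ht
  · rw [fc_of_nonneg hφ hφ0 _ _ ht, dφ_eq_zero_of_nonpos hφ hφ0 (neg_nonpos.2 ht)]
    refine Prod.ext ?_ ?_ <;> simp [explicitSol, fplus, hφ0 (-t) (neg_nonpos.2 ht)]
    ring
  · rw [fc_of_nonpos hφ hφ0 _ _ ht, dφ_eq_zero_of_nonpos hφ hφ0 ht]
    refine Prod.ext ?_ ?_ <;> simp [explicitSol, fminus, hφ0 t ht] <;> ring

theorem isBounded_range_explicitSol (hφ : ∀ t, HasDerivAt φ (dφ t) t)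
    (hφ0 : ∀ t ≤ (0:ℝ), φ t = 0) (hφ1 : ∀ t ≥ (1:ℝ), φ t = t) (a : ℝ) :
    Bornology.IsBounded (range (explicitSol φ a)) := by
  obtain ⟨m, hm⟩ := bddBelow_range_of_eq_zero_of_eq_self hφ hφ0 hφ1
  have hE : ∀ t, exp (-φ t) ∈ Icc 0 (exp (-m)) := fun t =>
    ⟨(exp_pos _).le, exp_le_exp.2 (neg_le_neg (hm ⟨t, rfl⟩))⟩
  have hK : IsCompact (Icc 0 (exp (-m)) ×ˢ Icc 0 (exp (-m))) := isCompact_Icc.prod isCompact_Icc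
  refine (hK.image (f := fun p : ℝ × ℝ => (a * p.1 * p.2, a ^ 2 * (p.2 ^ 2 - 1)))
    (by fun_prop)).isBounded.subset ?_
  rintro _ ⟨t, rfl⟩
  exact ⟨(exp (-φ t), exp (-φ (-t))), ⟨hE t, hE (-t)⟩, rfl⟩

theorem bddSol_explicitSol (hφ : ∀ t, HasDerivAt φ (dφ t) t)
    (hφ0 : ∀ t ≤ (0:ℝ), φ t = 0) (hφ1 : ∀ t ≥ (1:ℝ), φ t = t) (ε a : ℝ) :
    BddSol (a ^ 2) ε dφ (explicitSol φ a) :=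
  ⟨hasDerivAt_explicitSol hφ hφ0 ε a, isBounded_range_explicitSol hφ hφ0 hφ1 a⟩

variable {c ε : ℝ} {w : ℝ → ℝ × ℝ}

theorem BddSol.exists_abs_le (hw : BddSol c ε dφ w) :
    ∃ C, ∀ t, |(w t).1| ≤ C ∧ |(w t).2| ≤ C := by
  obtain ⟨C, hC⟩ := isBounded_iff_forall_norm_le.1 hw.2
  exact ⟨C, fun t => norm_prod_le_iff.1 (hC _ ⟨t, rfl⟩)⟩

theorem BddSol.snd_eq_zero_of_nonneg (hφ : ∀ t, HasDerivAt φ (dφ t) t)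
    (hφ0 : ∀ t ≤ (0:ℝ), φ t = 0) (hφ1 : ∀ t ≥ (1:ℝ), φ t = t) (hw : BddSol c ε dφ w)
    {t : ℝ} (ht : 0 ≤ t) : (w t).2 = 0 := by
  have hsnd : ∀ s ≥ (0:ℝ), (w s).2 = (w 0).2 * exp (φ s) := by
    intro s hs
    have hy : ∀ τ ∈ Ici (0:ℝ), HasDerivAt (fun s => (w s).2) (dφ τ * (w τ).2) τ := fun τ hτ => by
      simpa [fc_of_nonneg hφ hφ0 c ε hτ, fplus] using (hw.1 τ).snd
    simpa [hφ0 0 le_rfl] using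
      eq_mul_exp_sub_of_hasDerivAt (convex_Ici 0) (fun τ _ => hφ τ) hy self_mem_Ici hs
  obtain ⟨C, hC⟩ := hw.exists_abs_le
  have h0 : (w 0).2 = 0 := eq_zero_of_eventually_abs_mul_exp_le (C := C) <|
    eventually_atTop.2 ⟨1, fun s hs => by
      rw [← hφ1 s hs, ← hsnd s (by linarith)]; exact (hC s).2⟩
  rw [hsnd t ht, h0, zero_mul]

theorem BddSol.fst_eq_of_nonneg (hφ : ∀ t, HasDerivAt φ (dφ t) t)
    (hφ0 : ∀ t ≤ (0:ℝ), φ t = 0) (hφ1 : ∀ t ≥ (1:ℝ), φ t = t) (hw : BddSol c ε dφ w)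
    {t : ℝ} (ht : 0 ≤ t) : (w t).1 = (w 0).1 * exp (-φ t) := by
  have hy : ∀ τ ∈ Ici (0:ℝ), HasDerivAt (fun s => (w s).1) (-dφ τ * (w τ).1) τ := fun τ hτ => by
    simpa [fc_of_nonneg hφ hφ0 c ε hτ, fplus, hw.snd_eq_zero_of_nonneg hφ hφ0 hφ1 hτ] using
      (hw.1 τ).fst
  simpa [hφ0 0 le_rfl] using
    eq_mul_exp_sub_of_hasDerivAt (convex_Ici 0) (fun τ _ => (hφ τ).neg) hy self_mem_Ici ht

theorem fst_eq_of_nonpos (hφ : ∀ t, HasDerivAt φ (dφ t) t) (hφ0 : ∀ t ≤ (0:ℝ), φ t = 0)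
    (hw : ∀ t, HasDerivAt w (fc c ε dφ t (w t)) t) {t : ℝ} (ht : t ≤ 0) :
    (w t).1 = (w 0).1 * exp (-φ (-t)) := by
  have hψ : ∀ τ ∈ Iic (0:ℝ), HasDerivAt (fun s => -φ (-s)) (dφ (-τ)) τ := fun τ _ =>
    ((hφ (-τ)).comp_neg).neg.congr_deriv (neg_neg _)
  have hy : ∀ τ ∈ Iic (0:ℝ), HasDerivAt (fun s => (w s).1) (dφ (-τ) * (w τ).1) τ :=
    fun τ hτ => by simpa [fc_of_nonpos hφ hφ0 c ε hτ, fminus] using (hw τ).fst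
  simpa [hφ0 0 le_rfl] using
    eq_mul_exp_sub_of_hasDerivAt (convex_Iic 0) hψ hy self_mem_Iic ht

theorem BddSol.snd_eq_sq_sub_of_nonpos (hφ : ∀ t, HasDerivAt φ (dφ t) t)
    (hφ0 : ∀ t ≤ (0:ℝ), φ t = 0) (hφ1 : ∀ t ≥ (1:ℝ), φ t = t) (hw : BddSol c ε dφ w)
    {t : ℝ} (ht : t ≤ 0) : (w t).2 = (w t).1 ^ 2 - c := by
  set g : ℝ → ℝ := fun s => (w s).2 - (w s).1 ^ 2 + c with hg_def
  have hg : ∀ s ≤ (0:ℝ), g s = g 0 * exp (φ (-s)) := by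
    intro s hs
    have hy : ∀ τ ∈ Iic (0:ℝ), HasDerivAt g (-dφ (-τ) * g τ) τ := fun τ hτ => by
      refine (((hw.1 τ).snd.sub ((hw.1 τ).fst.pow 2)).add_const c).congr_deriv ?_
      simp [fc_of_nonpos hφ hφ0 c ε hτ, fminus, hg_def]
      ring
    simpa [hφ0 0 le_rfl] using eq_mul_exp_sub_of_hasDerivAt (convex_Iic 0)
      (fun τ _ => (hφ (-τ)).comp_neg) hy self_mem_Iic hs
  obtain ⟨C, hC⟩ := hw.exists_abs_le
  have hbound : ∀ s, |g s| ≤ C + C ^ 2 + |c| := fun s => by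
    calc |g s| ≤ |(w s).2| + |(w s).1| ^ 2 + |c| := by
          have := abs_add_three (w s).2 (-(w s).1 ^ 2) c
          rwa [abs_neg, abs_pow, ← sub_eq_add_neg] at this
      _ ≤ C + C ^ 2 + |c| := by
          gcongr
          exacts [(hC s).2, (hC s).1]
  have h0 : g 0 = 0 := eq_zero_of_eventually_abs_mul_exp_le (C := C + C ^ 2 + |c|) <|
    eventually_atTop.2 ⟨1, fun s hs => by
      rw [← hφ1 s hs, ← neg_neg s, ← hg (-s) (by linarith)]; exact hbound _⟩
  have := hg t ht
  rw [h0, zero_mul] at this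
  linarith

theorem BddSol.eq_explicitSol (hφ : ∀ t, HasDerivAt φ (dφ t) t)
    (hφ0 : ∀ t ≤ (0:ℝ), φ t = 0) (hφ1 : ∀ t ≥ (1:ℝ), φ t = t) (hw : BddSol c ε dφ w) :
    (w 0).1 ^ 2 = c ∧ w = explicitSol φ (w 0).1 := by
  have hc : (w 0).1 ^ 2 = c := by
    have := hw.snd_eq_sq_sub_of_nonpos hφ hφ0 hφ1 le_rfl
    rw [hw.snd_eq_zero_of_nonneg hφ hφ0 hφ1 le_rfl] at this
    linarith
  refine ⟨hc, funext fun t => ?_⟩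
  rcases le_total 0 t with ht | ht
  · have hφt : φ (-t) = 0 := hφ0 (-t) (neg_nonpos.2 ht)
    refine Prod.ext ?_ ?_
    · simp [explicitSol, hφt, hw.fst_eq_of_nonneg hφ hφ0 hφ1 ht]
    · simp [explicitSol, hφt, hw.snd_eq_zero_of_nonneg hφ hφ0 hφ1 ht]
  · have hx₁ := fst_eq_of_nonpos hφ hφ0 hw.1 ht
    refine Prod.ext ?_ ?_
    · simp [explicitSol, hφ0 t ht, hx₁]
    · simp only [explicitSol, hw.snd_eq_sq_sub_of_nonpos hφ hφ0 hφ1 ht, hx₁, ← hc]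
      ring

theorem bddSol_iff (hφ : ∀ t, HasDerivAt φ (dφ t) t) (hφ0 : ∀ t ≤ (0:ℝ), φ t = 0)
    (hφ1 : ∀ t ≥ (1:ℝ), φ t = t) :
    BddSol c ε dφ w ↔ ∃ a, a ^ 2 = c ∧ w = explicitSol φ a := by
  refine ⟨fun hw => ⟨_, hw.eq_explicitSol hφ hφ0 hφ1⟩, ?_⟩
  rintro ⟨a, rfl, rfl⟩
  exact bddSol_explicitSol hφ hφ0 hφ1 ε a

end

theorem stmt10_general (c ε : ℝ) (φ dφ : ℝ → ℝ)
    (hφ : ∀ t : ℝ, HasDerivAt φ (dφ t) t)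
    (hφ0 : ∀ t ≤ (0:ℝ), φ t = 0) (hφ1 : ∀ t ≥ (1:ℝ), φ t = t) :
    (0 < c → ∃ u v : ℝ → ℝ × ℝ,
      BddSol c ε dφ u ∧ BddSol c ε dφ v ∧
      u 0 = (Real.sqrt c, 0) ∧ v 0 = (-Real.sqrt c, 0) ∧ u ≠ v ∧
      ∀ w : ℝ → ℝ × ℝ, BddSol c ε dφ w → w = u ∨ w = v) ∧
    (c = 0 → ∃! u : ℝ → ℝ × ℝ, BddSol c ε dφ u) ∧
    (c < 0 → ¬ ∃ u : ℝ → ℝ × ℝ, BddSol c ε dφ u) := by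
  have hiff := fun w => bddSol_iff (c := c) (ε := ε) (w := w) hφ hφ0 hφ1
  refine ⟨fun hc => ?_, fun hc => ?_, fun hc => ?_⟩
  · have hsq : √c ^ 2 = c := sq_sqrt hc.le
    refine ⟨explicitSol φ √c, explicitSol φ (-√c), (hiff _).2 ⟨_, hsq, rfl⟩,
      (hiff _).2 ⟨_, by rw [neg_sq, hsq], rfl⟩, explicitSol_zero hφ0 _, explicitSol_zero hφ0 _,
      fun h => ?_, fun w hw => ?_⟩
    · have := congrArg (fun u => (u 0).1) h
      simp only [explicitSol_zero hφ0] at this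
      linarith [sqrt_pos.2 hc]
    · obtain ⟨a, ha, rfl⟩ := (hiff w).1 hw
      rcases sq_eq_sq_iff_eq_or_eq_neg.1 (ha.trans hsq.symm) with rfl | rfl
      exacts [Or.inl rfl, Or.inr rfl]
  · refine ⟨explicitSol φ 0, (hiff _).2 ⟨0, by rw [hc]; ring, rfl⟩, fun w hw => ?_⟩
    obtain ⟨a, ha, rfl⟩ := (hiff w).1 hw
    rw [pow_eq_zero_iff two_ne_zero |>.1 (ha.trans hc)]
  · rintro ⟨w, hw⟩
    obtain ⟨a, ha, -⟩ := (hiff w).1 hw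
    nlinarith [sq_nonneg a]

/-- `ẋ = f_c(t,x)` has exactly two bounded full solutions if
`c > 0` (with `u(0) = (±√c, 0)`), exactly one if `c = 0`, and none if
`c < 0`. -/
theorem stmt10 (c ε : ℝ) (hε : 0 < ε) (φ dφ : ℝ → ℝ)
    (hφ : ∀ t : ℝ, HasDerivAt φ (dφ t) t) (hdc : Continuous dφ)
    (hφ0 : ∀ t ≤ (0:ℝ), φ t = 0) (hφ1 : ∀ t ≥ (1:ℝ), φ t = t)
    (hdpos : ∀ t : ℝ, 0 ≤ dφ t) :
    (0 < c → ∃ u v : ℝ → ℝ × ℝ,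
      BddSol c ε dφ u ∧ BddSol c ε dφ v ∧
      u 0 = (Real.sqrt c, 0) ∧ v 0 = (-Real.sqrt c, 0) ∧ u ≠ v ∧
      ∀ w : ℝ → ℝ × ℝ, BddSol c ε dφ w → w = u ∨ w = v) ∧
    (c = 0 → ∃! u : ℝ → ℝ × ℝ, BddSol c ε dφ u) ∧
    (c < 0 → ¬ ∃ u : ℝ → ℝ × ℝ, BddSol c ε dφ u) :=
  stmt10_general c ε φ dφ hφ hφ0 hφ1
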